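/- Relative error bound: under the iteration M_{k+1} = M_k − κα∇_M𝓛̄(M_k,Γ_k), g_{k+1} = g_k − κ⁻¹(Γ_{k+1} − Γ_k + κα∇_Γ𝓛̄(M_k,Γ_k)), with 𝓛̄(M,Γ) = L̂(M) + (1/(2ν))‖M−Γ‖², ∇L̂ Lipschitz with constant K, α, κ, ν > 0 and κ⁻¹ > αν⁻¹, the vector H_{k+1} = (α∇_M𝓛̄(M_{k+1},Γ_{k+1}), α∇_Γ𝓛̄(M_{k+1},Γ_{k+1}) + g_{k+1} − g_k, Γ_k − Γ_{k+1}) satisfies ‖H_{k+1}‖ ≤ (2κ⁻¹ + 1 + α(K + 2ν⁻¹))·‖P_{k+1} − P_k‖, where P_k = (M_k, Γ_k). -/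
import Mathlib

set_option maxHeartbeats 1600000


/-- relative error bound. With
∇_M𝓛̄(M,Γ) = ∇L̂(M) + ν⁻¹(M−Γ), ∇_Γ𝓛̄(M,Γ) = ν⁻¹(Γ−M), updates
M_{k+1} = M_k − κα∇_M𝓛̄(M_k,Γ_k),
g_{k+1} = g_k − κ⁻¹(Γ_{k+1} − Γ_k + κα∇_Γ𝓛̄(M_k,Γ_k)),
and κ⁻¹ > αν⁻¹, the subgradient H_{k+1} of the Lyapunov function satisfies
‖H_{k+1}‖ ≤ (2κ⁻¹ + 1 + α(K + 2ν⁻¹))‖P_{k+1} − P_k‖. -/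
theorem relative_error_bound {n : ℕ}
    (Lhat : EuclideanSpace ℝ (Fin n) → ℝ)
    (gradLhat : EuclideanSpace ℝ (Fin n) → EuclideanSpace ℝ (Fin n))
    (hgrad : ∀ x, HasGradientAt Lhat (gradLhat x) x)
    (K ν κ α : ℝ) (hK : 0 < K) (hν : 0 < ν) (hκ : 0 < κ) (hα : 0 < α)
    (hLip : ∀ x y, ‖gradLhat x - gradLhat y‖ ≤ K * ‖x - y‖)
    (hκν : α * ν⁻¹ < κ⁻¹)
    (Mk Mk1 Γk Γk1 gk gk1 : EuclideanSpace ℝ (Fin n))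
    (hM : Mk1 = Mk - (κ * α) • (gradLhat Mk + ν⁻¹ • (Mk - Γk)))
    (hg : gk1 = gk - κ⁻¹ • (Γk1 - Γk + (κ * α) • (ν⁻¹ • (Γk - Mk)))) :
    Real.sqrt (‖α • (gradLhat Mk1 + ν⁻¹ • (Mk1 - Γk1))‖ ^ 2
        + ‖α • (ν⁻¹ • (Γk1 - Mk1)) + gk1 - gk‖ ^ 2
        + ‖Γk - Γk1‖ ^ 2)
      ≤ (2 * κ⁻¹ + 1 + α * (K + 2 * ν⁻¹))
          * Real.sqrt (‖Mk1 - Mk‖ ^ 2 + ‖Γk1 - Γk‖ ^ 2) := by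
  have hκ0 : (κ:ℝ) ≠ 0 := hκ.ne'
  -- vector identities
  have key1 : α • (gradLhat Mk1 + ν⁻¹ • (Mk1 - Γk1))
      = α • (gradLhat Mk1 - gradLhat Mk)
        + (α * ν⁻¹) • ((Mk1 - Mk) - (Γk1 - Γk))
        + (-κ⁻¹) • (Mk1 - Mk) := by
    rw [hM]; match_scalars <;> field_simp <;> ring
  have key2 : α • (ν⁻¹ • (Γk1 - Mk1)) + gk1 - gk
      = (α * ν⁻¹) • ((Γk1 - Γk) - (Mk1 - Mk)) + (-κ⁻¹) • (Γk1 - Γk) := by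
    rw [hg]; match_scalars <;> field_simp <;> ring
  set x := ‖Mk1 - Mk‖ with hxdef
  set y := ‖Γk1 - Γk‖ with hydef
  have hx : 0 ≤ x := norm_nonneg _
  have hy : 0 ≤ y := norm_nonneg _
  set p := α * K with hpdef
  set q := α * ν⁻¹ with hqdef
  set r := κ⁻¹ with hrdef
  have hp : 0 < p := mul_pos hα hK
  have hq : 0 < q := mul_pos hα (inv_pos.2 hν)
  have hr : 0 < r := inv_pos.2 hκ
  have ha : ‖α • (gradLhat Mk1 + ν⁻¹ • (Mk1 - Γk1))‖ ≤ (p + q + r) * x + q * y := by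
    rw [key1]
    calc ‖α • (gradLhat Mk1 - gradLhat Mk) + (α * ν⁻¹) • ((Mk1 - Mk) - (Γk1 - Γk))
          + (-κ⁻¹) • (Mk1 - Mk)‖
        ≤ ‖α • (gradLhat Mk1 - gradLhat Mk)‖ + ‖(α * ν⁻¹) • ((Mk1 - Mk) - (Γk1 - Γk))‖
          + ‖(-κ⁻¹) • (Mk1 - Mk)‖ := norm_add₃_le
      _ ≤ α * (K * x) + q * (x + y) + r * x := by
          gcongr
          · rw [norm_smul, Real.norm_of_nonneg hα.le]
            exact mul_le_mul_of_nonneg_left (hLip Mk1 Mk) hα.le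
          · rw [norm_smul, Real.norm_of_nonneg hq.le]
            exact mul_le_mul_of_nonneg_left (norm_sub_le _ _) hq.le
          · rw [norm_smul, norm_neg, Real.norm_of_nonneg hr.le]
      _ = (p + q + r) * x + q * y := by rw [hpdef]; ring
  have hb : ‖α • (ν⁻¹ • (Γk1 - Mk1)) + gk1 - gk‖ ≤ q * x + (q + r) * y := by
    rw [key2]
    calc ‖(α * ν⁻¹) • ((Γk1 - Γk) - (Mk1 - Mk)) + (-κ⁻¹) • (Γk1 - Γk)‖
        ≤ ‖(α * ν⁻¹) • ((Γk1 - Γk) - (Mk1 - Mk))‖ + ‖(-κ⁻¹) • (Γk1 - Γk)‖ :=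
          norm_add_le _ _
      _ ≤ q * (y + x) + r * y := by
          gcongr
          · rw [norm_smul, Real.norm_of_nonneg hq.le]
            exact mul_le_mul_of_nonneg_left (norm_sub_le _ _) hq.le
          · rw [norm_smul, norm_neg, Real.norm_of_nonneg hr.le]
      _ = q * x + (q + r) * y := by ring
  have hyy : ‖Γk - Γk1‖ = y := by rw [norm_sub_rev]
  set a := ‖α • (gradLhat Mk1 + ν⁻¹ • (Mk1 - Γk1))‖ with hadef
  set b := ‖α • (ν⁻¹ • (Γk1 - Mk1)) + gk1 - gk‖ with hbdef
  have ha0 : 0 ≤ a := norm_nonneg _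
  have hb0 : 0 ≤ b := norm_nonneg _
  set c := 2 * κ⁻¹ + 1 + α * (K + 2 * ν⁻¹) with hcdef
  have hcr : c = 2 * r + 1 + p + 2 * q := by rw [hcdef, hpdef, hqdef, hrdef]; ring
  have hc0 : 0 ≤ c := by rw [hcr]; positivity
  have ha2 : a ^ 2 ≤ ((p + q + r) * x + q * y) ^ 2 := by
    exact pow_le_pow_left₀ ha0 ha 2
  have hb2 : b ^ 2 ≤ (q * x + (q + r) * y) ^ 2 := by
    exact pow_le_pow_left₀ hb0 hb 2
  have hfinal : a ^ 2 + b ^ 2 + y ^ 2 ≤ c ^ 2 * (x ^ 2 + y ^ 2) := by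
    rw [hcr]
    have hD : 0 ≤ (p + q + r) * q + q * (q + r) := by positivity
    have h1 : ((p + q + r) * q + q * (q + r)) * (2 * x * y)
        ≤ ((p + q + r) * q + q * (q + r)) * (x ^ 2 + y ^ 2) :=
      mul_le_mul_of_nonneg_left (two_mul_le_add_sq x y) hD
    have hA : (p + q + r) ^ 2 + q ^ 2 + ((p + q + r) * q + q * (q + r)) ≤ (2 * r + 1 + p + 2 * q) ^ 2 := by
      nlinarith [hp, hq, hr, mul_pos hp hq, mul_pos hq hr, mul_pos hp hr,
        sq_nonneg p, sq_nonneg q, sq_nonneg r]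
    have hB : q ^ 2 + (q + r) ^ 2 + 1 + ((p + q + r) * q + q * (q + r)) ≤ (2 * r + 1 + p + 2 * q) ^ 2 := by
      nlinarith [hp, hq, hr, mul_pos hp hq, mul_pos hq hr, mul_pos hp hr,
        sq_nonneg p, sq_nonneg q, sq_nonneg r]
    have hAx := mul_le_mul_of_nonneg_right hA (sq_nonneg x)
    have hBy := mul_le_mul_of_nonneg_right hB (sq_nonneg y)
    linarith [ha2, hb2, h1, hAx, hBy]
  rw [hyy]
  calc Real.sqrt (a ^ 2 + b ^ 2 + y ^ 2)
      ≤ Real.sqrt (c ^ 2 * (x ^ 2 + y ^ 2)) := Real.sqrt_le_sqrt hfinal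
    _ = c * Real.sqrt (x ^ 2 + y ^ 2) := by
        rw [Real.sqrt_mul (sq_nonneg c), Real.sqrt_sq hc0]
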